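/- (Proposition 3, part 3.) Consider the dynamics with cost c ≥ 0 such that c < c_t for every period t ≤ n−2. Assume that for every t ≤ n−2 the least and most accurate agents are unique, that l_t ≠ h_0, and that P^{h_t}_t(l_t,k) ≠ G_t(l_t,k) for some k ∉ {l_t,h_t}. Then a link is added at every period t = 0, 1, …, n−2, so that G_{n−1} contains exactly n−1 links; consequently any steady-state network contains at least n−1 links. -/

import Mathlib

open Finset

/-- Accuracy of perception `P` with respect to network `G` on `n` agents. -/
noncomputable def acc (n : ℕ) (G P : Fin n → Fin n → Bool) : ℝ :=
  (((Finset.univ : Finset (Fin n × Fin n)).filter fun pr =>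
      pr.1 < pr.2 ∧ P pr.1 pr.2 = G pr.1 pr.2).card : ℝ) / ((n : ℝ) * ((n : ℝ) - 1) / 2)

/-- The coevolution dynamics of a network and perceptions, with linking cost `c`.
`G t` is the network at period `t`, `P t i` is agent `i`'s perception at period `t`,
`l t` is the chosen least accurate agent and `h t` the chosen most accurate agent. -/
structure Dyn (n : ℕ) (c : ℝ) where
  G : ℕ → Fin n → Fin n → Bool
  P : ℕ → Fin n → Fin n → Fin n → Bool
  l : ℕ → Fin n
  h : ℕ → Fin n
  G_symm : ∀ t j k, G t j k = G t k j
  G_irrefl : ∀ t i, G t i i = false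
  P_symm : ∀ t i j k, P t i j k = P t i k j
  P_irrefl : ∀ t i j, P t i j j = false
  G_init : ∀ j k, G 0 j k = false
  own_correct : ∀ t i k, P t i i k = G t i k
  l_min : ∀ t i, acc n (G t) (P t (l t)) ≤ acc n (G t) (P t i)
  h_max : ∀ t i, acc n (G t) (P t i) ≤ acc n (G t) (P t (h t))
  h_pref : ∀ t, (∃ i, G t (l t) i = true ∧
      ∀ j, acc n (G t) (P t j) ≤ acc n (G t) (P t i)) → G t (l t) (h t) = true
  step_old : ∀ t, G t (l t) (h t) = true →
      (G (t + 1) = G t ∧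
        ∀ j k, j ≠ l t → k ≠ l t → P (t + 1) (l t) j k = P t (h t) j k)
  step_add : ∀ t, G t (l t) (h t) = false →
      c < 2 / (n : ℝ) + (1 - 2 / (n : ℝ)) * acc n (G t) (P t (h t))
          - acc n (G t) (P t (l t)) →
      ((∀ j k, G (t + 1) j k = true ↔
          (G t j k = true ∨ (j = l t ∧ k = h t) ∨ (j = h t ∧ k = l t))) ∧
        ∀ j k, j ≠ l t → k ≠ l t → P (t + 1) (l t) j k = P t (h t) j k)
  step_none : ∀ t, G t (l t) (h t) = false →
      ¬ (c < 2 / (n : ℝ) + (1 - 2 / (n : ℝ)) * acc n (G t) (P t (h t))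
          - acc n (G t) (P t (l t))) →
      (G (t + 1) = G t ∧ ∀ i, P (t + 1) i = P t i)
  keep : ∀ t i, i ≠ l t → ∀ j k, j ≠ i → k ≠ i → P (t + 1) i j k = P t i j k

namespace Dyn

variable {n : ℕ} {c : ℝ}

/-- Accuracy of agent `i` at period `t`. -/
noncomputable def rho (D : Dyn n c) (t : ℕ) (i : Fin n) : ℝ :=
  acc n (D.G t) (D.P t i)

/-- The threshold cost `c_t = 2/n + (1 − 2/n)·ρ^{h_t}_t − ρ^{l_t}_t`. -/
noncomputable def thr (D : Dyn n c) (t : ℕ) : ℝ :=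
  2 / (n : ℝ) + (1 - 2 / (n : ℝ)) * D.rho t (D.h t) - D.rho t (D.l t)

/-- Number of links in a network. -/
def numLinks (G : Fin n → Fin n → Bool) : ℕ :=
  ((Finset.univ : Finset (Fin n × Fin n)).filter fun pr =>
    pr.1 < pr.2 ∧ G pr.1 pr.2 = true).card

end Dyn

/-!
By induction on `t ≤ n - 1`: the agent `h t` perceives correctly every link of every agent in
`involved t = {h 0, l 0, …, l (t - 1)}`, and every link of `G t` has both ends in `involved t`.
Since `h t` misperceives a link of `l t`, the updater `l t` is not involved; so it is not yet linked
to `h t`, and as `c < c_t` the link is added. Copying the view of `h t`, agent `l t` then agrees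
with `G (t + 1)` on every pair `h t` agreed on at `t`, and also on the misperceived one, while every
other agent gains at most the new link and `h t` gains nothing. So `l t` becomes the unique most
accurate agent `h (t + 1)`, and the invariant passes to `involved (t + 1)`. Hence `n - 1` links are
added one by one, and link counts never decrease afterwards.
-/

-- `acc` and `numLinks` count an unordered pair `s(j, k)` through its increasing representative.
theorem Sym2.exists_lt_mk_eq {α : Type*} [LinearOrder α] {x y : α} (hxy : x ≠ y) :
    ∃ p : α × α, p.1 < p.2 ∧ s(p.1, p.2) = s(x, y) := by
  rcases lt_or_gt_of_ne hxy with h | h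
  · exact ⟨(x, y), h, rfl⟩
  · exact ⟨(y, x), h, Sym2.eq_swap⟩

theorem Sym2.eq_of_lt_of_mk_eq {α : Type*} [LinearOrder α] {p q : α × α} (hp : p.1 < p.2)
    (hq : q.1 < q.2) (h : s(p.1, p.2) = s(q.1, q.2)) : p = q := by
  rcases Sym2.eq_iff.1 h with ⟨h₁, h₂⟩ | ⟨h₁, h₂⟩
  · exact Prod.ext h₁ h₂
  · exact absurd (h₁ ▸ h₂ ▸ hp) (lt_asymm hq)

theorem Sym2.card_filter_lt_mk_eq_le_one {α : Type*} [LinearOrder α] [Fintype α] (z : Sym2 α) :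
    #(univ.filter fun p : α × α => p.1 < p.2 ∧ s(p.1, p.2) = z) ≤ 1 := by
  refine card_le_one.2 fun p hp q hq => ?_
  simp only [mem_filter, mem_univ, true_and] at hp hq
  exact Sym2.eq_of_lt_of_mk_eq hp.1 hq.1 (hp.2.trans hq.2.symm)

theorem Sym2.apply_eq_of_mk_eq {α β : Type*} {F : α → α → β} (hF : ∀ a b, F a b = F b a)
    {a b x y : α} (h : s(a, b) = s(x, y)) : F a b = F x y := by
  rcases Sym2.eq_iff.1 h with ⟨rfl, rfl⟩ | ⟨rfl, rfl⟩
  · rfl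
  · exact hF a b

def agreeSet {n : ℕ} (G P : Fin n → Fin n → Bool) : Finset (Fin n × Fin n) :=
  univ.filter fun p => p.1 < p.2 ∧ P p.1 p.2 = G p.1 p.2

theorem mem_agreeSet {n : ℕ} {G P : Fin n → Fin n → Bool} {p : Fin n × Fin n} :
    p ∈ agreeSet G P ↔ p.1 < p.2 ∧ P p.1 p.2 = G p.1 p.2 := by
  simp [agreeSet]

theorem acc_lt_acc_iff {n : ℕ} (hn : 2 ≤ n) {G P G' P' : Fin n → Fin n → Bool} :
    acc n G P < acc n G' P' ↔ #(agreeSet G P) < #(agreeSet G' P') := by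
  have hM : (0 : ℝ) < (n : ℝ) * ((n : ℝ) - 1) / 2 := by
    have : (2 : ℝ) ≤ n := by exact_mod_cast hn
    nlinarith
  exact (div_lt_div_iff_of_pos_right hM).trans Nat.cast_lt

namespace Dyn

variable {n : ℕ} {c : ℝ}

theorem numLinks_eq_succ_of_iff {G G' : Fin n → Fin n → Bool} (hG : ∀ j k, G j k = G k j)
    {a b : Fin n} (hab : a ≠ b) (hGab : G a b = false)
    (hG' : ∀ j k, G' j k = true ↔ G j k = true ∨ s(j, k) = s(a, b)) :
    numLinks G' = numLinks G + 1 := by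
  obtain ⟨p, hp, hpab⟩ := Sym2.exists_lt_mk_eq hab
  have hGp : G p.1 p.2 = false := (Sym2.apply_eq_of_mk_eq hG hpab).trans hGab
  have hlinks : (univ.filter fun q : Fin n × Fin n => q.1 < q.2 ∧ G' q.1 q.2 = true) =
      insert p (univ.filter fun q : Fin n × Fin n => q.1 < q.2 ∧ G q.1 q.2 = true) := by
    ext q
    simp only [mem_insert, mem_filter, mem_univ, true_and, hG']
    have hq_eq : q.1 < q.2 ∧ s(q.1, q.2) = s(a, b) ↔ q = p :=
      ⟨fun h => Sym2.eq_of_lt_of_mk_eq h.1 hp (h.2.trans hpab.symm), fun h => h ▸ ⟨hp, hpab⟩⟩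
    rw [← hq_eq]
    tauto
  unfold numLinks
  rw [hlinks, card_insert_of_notMem (by simp [hGp])]

variable (D : Dyn n c) {t : ℕ}

theorem P_eq_G_of_mem {i j k : Fin n} (hi : i ∈ s(j, k)) : D.P t i j k = D.G t j k := by
  rcases Sym2.mem_iff.1 hi with rfl | rfl
  · exact D.own_correct t i k
  · rw [D.P_symm, D.own_correct, D.G_symm]

theorem G_succ_of_ne (t : ℕ) {j k : Fin n} (hjk : s(j, k) ≠ s(D.l t, D.h t)) :
    D.G (t + 1) j k = D.G t j k := by
  cases hlink : D.G t (D.l t) (D.h t)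
  · by_cases hct : c < D.thr t
    · rw [Bool.eq_iff_iff, (D.step_add t hlink hct).1 j k, ← Sym2.eq_iff]
      tauto
    · rw [(D.step_none t hlink hct).1]
  · rw [(D.step_old t hlink).1]

theorem G_succ_of_eq_true (t : ℕ) {j k : Fin n} (hjk : D.G t j k = true) :
    D.G (t + 1) j k = true := by
  by_cases hlink : s(j, k) = s(D.l t, D.h t)
  · rw [(D.step_old t ((Sym2.apply_eq_of_mk_eq (D.G_symm t) hlink).symm.trans hjk)).1, hjk]
  · rwa [D.G_succ_of_ne t hlink]

theorem monotone_numLinks : Monotone fun t => numLinks (D.G t) :=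
  monotone_nat_of_le_succ fun t => card_le_card fun p hp => by
    simp only [mem_filter, mem_univ, true_and] at hp ⊢
    exact ⟨hp.1, D.G_succ_of_eq_true t hp.2⟩

theorem numLinks_G_zero : numLinks (D.G 0) = 0 := by
  simp [numLinks, D.G_init]

def KnowsLinks (t : ℕ) (i j : Fin n) : Prop := ∀ k, D.P t i j k = D.G t j k

def Updates (t : ℕ) : Prop :=
  ∀ j k, j ≠ D.l t → k ≠ D.l t → D.P (t + 1) (D.l t) j k = D.P t (D.h t) j k

theorem agrees_succ_iff {i j k : Fin n} (hi : i ≠ D.l t) (hjk : s(j, k) ≠ s(D.l t, D.h t)) :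
    D.P (t + 1) i j k = D.G (t + 1) j k ↔ D.P t i j k = D.G t j k := by
  by_cases hmem : i ∈ s(j, k)
  · exact iff_of_true (D.P_eq_G_of_mem hmem) (D.P_eq_G_of_mem hmem)
  · obtain ⟨hij, hik⟩ := not_or.1 (Sym2.mem_iff.not.1 hmem)
    rw [D.keep t i hi j k (Ne.symm hij) (Ne.symm hik), D.G_succ_of_ne t hjk]

theorem agrees_succ_l_iff (hup : D.Updates t) {j k : Fin n} (hl : D.l t ∉ s(j, k)) :
    D.P (t + 1) (D.l t) j k = D.G (t + 1) j k ↔ D.P t (D.h t) j k = D.G t j k := by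
  obtain ⟨hj, hk⟩ := not_or.1 (Sym2.mem_iff.not.1 hl)
  rw [hup j k (Ne.symm hj) (Ne.symm hk),
    D.G_succ_of_ne t fun hlink => hl (hlink ▸ Sym2.mem_mk_left _ _)]

theorem knowsLinks_succ_l (hup : D.Updates t) {j : Fin n} (hj : j ≠ D.l t)
    (hknows : D.KnowsLinks t (D.h t) j) : D.KnowsLinks (t + 1) (D.l t) j := by
  intro k
  by_cases hk : k = D.l t
  · exact D.P_eq_G_of_mem (hk ▸ Sym2.mem_mk_right j k)
  · exact (D.agrees_succ_l_iff hup (by simp [Sym2.mem_iff, Ne.symm hj, Ne.symm hk])).2 (hknows k)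

theorem card_agreeSet_succ_le {i : Fin n} (hi : i ≠ D.l t) :
    #(agreeSet (D.G (t + 1)) (D.P (t + 1) i)) ≤ #(agreeSet (D.G t) (D.P t i)) + 1 := by
  have hnew : agreeSet (D.G (t + 1)) (D.P (t + 1) i) \ agreeSet (D.G t) (D.P t i) ⊆
      univ.filter fun p : Fin n × Fin n => p.1 < p.2 ∧ s(p.1, p.2) = s(D.l t, D.h t) := by
    intro p hp
    simp only [mem_sdiff, mem_agreeSet, mem_filter, mem_univ, true_and] at hp ⊢
    exact ⟨hp.1.1, by_contra fun hne => hp.2 ⟨hp.1.1, (D.agrees_succ_iff hi hne).1 hp.1.2⟩⟩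
  have := card_le_card hnew
  have := Sym2.card_filter_lt_mk_eq_le_one s(D.l t, D.h t)
  have := card_le_card_sdiff_add_card (s := agreeSet (D.G (t + 1)) (D.P (t + 1) i))
    (t := agreeSet (D.G t) (D.P t i))
  omega

theorem agreeSet_succ_h (hlh : D.l t ≠ D.h t) :
    agreeSet (D.G (t + 1)) (D.P (t + 1) (D.h t)) = agreeSet (D.G t) (D.P t (D.h t)) := by
  ext p
  simp only [mem_agreeSet]
  refine and_congr_right fun _ => ?_
  by_cases hlink : s(p.1, p.2) = s(D.l t, D.h t)
  · have hmem : D.h t ∈ s(p.1, p.2) := hlink ▸ Sym2.mem_mk_right _ _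
    exact iff_of_true (D.P_eq_G_of_mem hmem) (D.P_eq_G_of_mem hmem)
  · exact D.agrees_succ_iff (Ne.symm hlh) hlink

theorem agreeSet_h_ssubset_succ_l (hup : D.Updates t)
    (hmis : ¬ D.KnowsLinks t (D.h t) (D.l t)) :
    agreeSet (D.G t) (D.P t (D.h t)) ⊂ agreeSet (D.G (t + 1)) (D.P (t + 1) (D.l t)) := by
  obtain ⟨k, hk⟩ := not_forall.1 hmis
  have hlk : D.l t ≠ k := by
    rintro rfl
    exact hk (by rw [D.P_irrefl, D.G_irrefl])
  obtain ⟨p, hp, hpk⟩ := Sym2.exists_lt_mk_eq hlk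
  refine ssubset_iff.2 ⟨p, fun hmem => hk ?_, insert_subset_iff.2 ⟨?_, fun q hq => ?_⟩⟩
  · rw [← Sym2.apply_eq_of_mk_eq (D.P_symm t _) hpk, ← Sym2.apply_eq_of_mk_eq (D.G_symm t) hpk]
    exact (mem_agreeSet.1 hmem).2
  · exact mem_agreeSet.2 ⟨hp, D.P_eq_G_of_mem (hpk ▸ Sym2.mem_mk_left _ _)⟩
  · rw [mem_agreeSet] at hq ⊢
    refine ⟨hq.1, ?_⟩
    by_cases hl : D.l t ∈ s(q.1, q.2)
    · exact D.P_eq_G_of_mem hl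
    · exact (D.agrees_succ_l_iff hup hl).2 hq.2

theorem rho_succ_lt_rho_succ_l (hn : 2 ≤ n) (hlh : D.l t ≠ D.h t) (hup : D.Updates t)
    (hmax : ∀ i, i ≠ D.h t → D.rho t i < D.rho t (D.h t))
    (hmis : ¬ D.KnowsLinks t (D.h t) (D.l t)) {i : Fin n} (hi : i ≠ D.l t) :
    D.rho (t + 1) i < D.rho (t + 1) (D.l t) := by
  have hgain := card_lt_card (D.agreeSet_h_ssubset_succ_l hup hmis)
  refine (acc_lt_acc_iff hn).2 ?_
  rcases eq_or_ne i (D.h t) with rfl | hih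
  · rwa [D.agreeSet_succ_h hlh]
  · have := (acc_lt_acc_iff hn).1 (hmax i hih)
    have := D.card_agreeSet_succ_le hi
    omega

theorem h_succ_eq_l (hn : 2 ≤ n) (hlh : D.l t ≠ D.h t) (hup : D.Updates t)
    (hmax : ∀ i, i ≠ D.h t → D.rho t i < D.rho t (D.h t))
    (hmis : ¬ D.KnowsLinks t (D.h t) (D.l t)) : D.h (t + 1) = D.l t := by
  by_contra hne
  exact (D.h_max (t + 1) (D.l t)).not_gt (D.rho_succ_lt_rho_succ_l hn hlh hup hmax hmis hne)

def involved (t : ℕ) : Finset (Fin n) := insert (D.h 0) ((range t).image D.l)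

theorem involved_succ (t : ℕ) : D.involved (t + 1) = insert (D.l t) (D.involved t) := by
  simp only [involved, range_add_one, image_insert, Finset.insert_comm]

structure Invariant (t : ℕ) : Prop where
  h_mem : D.h t ∈ D.involved t
  knowsLinks : ∀ j ∈ D.involved t, D.KnowsLinks t (D.h t) j
  mem_of_link : ∀ j k, D.G t j k = true → j ∈ D.involved t

theorem invariant_zero : D.Invariant 0 where
  h_mem := mem_insert_self _ _
  knowsLinks j hj := by
    obtain rfl : j = D.h 0 := by simpa [involved] using hj
    exact D.own_correct 0 _
  mem_of_link j k hjk := by simp [D.G_init] at hjk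

variable {D}

theorem Invariant.l_notMem (hI : D.Invariant t) (hmis : ¬ D.KnowsLinks t (D.h t) (D.l t)) :
    D.l t ∉ D.involved t :=
  fun hl => hmis (hI.knowsLinks _ hl)

theorem Invariant.l_ne_h (hI : D.Invariant t) (hmis : ¬ D.KnowsLinks t (D.h t) (D.l t)) :
    D.l t ≠ D.h t :=
  fun hlh => hI.l_notMem hmis (hlh ▸ hI.h_mem)

theorem Invariant.G_l_h (hI : D.Invariant t) (hmis : ¬ D.KnowsLinks t (D.h t) (D.l t)) :
    D.G t (D.l t) (D.h t) = false :=
  Bool.eq_false_iff.2 fun hlink => hI.l_notMem hmis (hI.mem_of_link _ _ hlink)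

theorem Invariant.succ (hI : D.Invariant t) (hn : 2 ≤ n) (hct : c < D.thr t)
    (hmax : ∀ i, i ≠ D.h t → D.rho t i < D.rho t (D.h t))
    (hmis : ¬ D.KnowsLinks t (D.h t) (D.l t)) : D.Invariant (t + 1) := by
  obtain ⟨hadd, hup⟩ := D.step_add t (hI.G_l_h hmis) hct
  have hh : D.h (t + 1) = D.l t := D.h_succ_eq_l hn (hI.l_ne_h hmis) hup hmax hmis
  refine ⟨?_, fun j hj => ?_, fun j k hjk => ?_⟩ <;> rw [involved_succ] at *
  · rw [hh]
    exact mem_insert_self _ _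
  · rw [hh]
    rcases mem_insert.1 hj with rfl | hj
    · exact D.own_correct _ _
    · exact D.knowsLinks_succ_l hup (fun e => hI.l_notMem hmis (e ▸ hj)) (hI.knowsLinks j hj)
  · rcases (hadd j k).1 hjk with hjk | ⟨rfl, -⟩ | ⟨rfl, -⟩
    · exact mem_insert_of_mem (hI.mem_of_link j k hjk)
    · exact mem_insert_self _ _
    · exact mem_insert_of_mem hI.h_mem

theorem Invariant.numLinks_succ (hI : D.Invariant t) (hct : c < D.thr t)
    (hmis : ¬ D.KnowsLinks t (D.h t) (D.l t)) :
    numLinks (D.G (t + 1)) = numLinks (D.G t) + 1 :=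
  numLinks_eq_succ_of_iff (D.G_symm t) (hI.l_ne_h hmis) (hI.G_l_h hmis) fun j k => by
    rw [(D.step_add t (hI.G_l_h hmis) hct).1 j k, Sym2.eq_iff]

end Dyn

theorem stmt13_general (n : ℕ) (hn : 3 ≤ n) (c : ℝ) (D : Dyn n c)
    (hc : ∀ t, t ≤ n - 2 → c < D.thr t)
    (huniq : ∀ t, t ≤ n - 2 →
      (∀ i, i ≠ D.l t → D.rho t (D.l t) < D.rho t i) ∧
      (∀ i, i ≠ D.h t → D.rho t i < D.rho t (D.h t)))
    (hmis : ∀ t, t ≤ n - 2 → ∃ k, k ≠ D.l t ∧ k ≠ D.h t ∧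
      D.P t (D.h t) (D.l t) k ≠ D.G t (D.l t) k) :
    (∀ t, t ≤ n - 2 → Dyn.numLinks (D.G (t + 1)) = Dyn.numLinks (D.G t) + 1) ∧
    Dyn.numLinks (D.G (n - 1)) = n - 1 ∧
    (∀ t, (∀ s, t ≤ s → D.G s = D.G t) → n - 1 ≤ Dyn.numLinks (D.G t)) := by
  have hnot_knows : ∀ t, t ≤ n - 2 → ¬ D.KnowsLinks t (D.h t) (D.l t) := fun t ht hknows =>
    let ⟨k, _, _, hk⟩ := hmis t ht
    hk (hknows k)
  have hinv : ∀ t, t ≤ n - 1 → D.Invariant t := by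
    intro t
    induction t with
    | zero => exact fun _ => D.invariant_zero
    | succ t ih =>
      exact fun ht => (ih (by omega)).succ (by omega) (hc t (by omega)) (huniq t (by omega)).2
        (hnot_knows t (by omega))
  have hstep : ∀ t, t ≤ n - 2 → Dyn.numLinks (D.G (t + 1)) = Dyn.numLinks (D.G t) + 1 :=
    fun t ht => (hinv t (by omega)).numLinks_succ (hc t ht) (hnot_knows t ht)
  have hcount : ∀ t, t ≤ n - 1 → Dyn.numLinks (D.G t) = t := by
    intro t
    induction t with
    | zero => exact fun _ => D.numLinks_G_zero
    | succ t ih => exact fun ht => by rw [hstep t (by omega), ih (by omega)]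
  refine ⟨hstep, hcount (n - 1) le_rfl, fun t hsteady => ?_⟩
  rcases le_total t (n - 1) with ht | ht
  · rw [← hsteady (n - 1) ht, hcount (n - 1) le_rfl]
  · exact hcount (n - 1) le_rfl ▸ D.monotone_numLinks ht

/-- Proposition 3, part 3: if `c < c_t` for every period `t ≤ n−2` (with unique
minimizers/maximizers, `l_t ≠ h_0`, and a misperceived third-party link state of the
updater at each such period), then a link is added at every period `t ≤ n−2`, so `G_{n−1}`
has exactly `n−1` links; consequently any steady-state network has at least `n−1` links. -/
theorem stmt13 (n : ℕ) (hn : 3 ≤ n) (c : ℝ) (hc0 : 0 ≤ c) (D : Dyn n c)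
    (hc : ∀ t, t ≤ n - 2 → c < D.thr t)
    (huniq : ∀ t, t ≤ n - 2 →
      (∀ i, i ≠ D.l t → D.rho t (D.l t) < D.rho t i) ∧
      (∀ i, i ≠ D.h t → D.rho t i < D.rho t (D.h t)))
    (hlh0 : ∀ t, t ≤ n - 2 → D.l t ≠ D.h 0)
    (hmis : ∀ t, t ≤ n - 2 → ∃ k, k ≠ D.l t ∧ k ≠ D.h t ∧
      D.P t (D.h t) (D.l t) k ≠ D.G t (D.l t) k) :
    (∀ t, t ≤ n - 2 → Dyn.numLinks (D.G (t + 1)) = Dyn.numLinks (D.G t) + 1) ∧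
    Dyn.numLinks (D.G (n - 1)) = n - 1 ∧
    (∀ t, (∀ s, t ≤ s → D.G s = D.G t) → n - 1 ≤ Dyn.numLinks (D.G t)) :=
  stmt13_general n hn c D hc huniq hmis
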